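/- arXiv:math/0003117 — 3 statements merged into one kernel-verified Lean document; each statement's English description precedes it below -/
import Mathlib

section
/- Given a hierarchical code (S_k, Q_k, φ_{k*})_{k≥1} with a non-degenerate address sequence (a_k) and a fitted sequence (s_k, a_k)_{k≥1} (meaning φ_{k*}(s_{k+1})(a_k) = s_k for all k), there exist configurations ξ^k : Z → S_k such that φ_{k*}(ξ^{k+1}) = ξ^k and ξ^k(o_k) = s_k for all k ≥ 1, where o_k = −a₁B₁ − ⋯ − a_{k−1}B_{k−1} and B_k = Q₁⋯Q_{k−1}. -/
namespace HCFaux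

variable (Q a : ℕ → ℕ)

/-- parent cell index one level up -/
def par (k : ℕ) (n : ℤ) : ℤ := (n + a k) / (Q k : ℤ)

/-- residue: position within the parent's block -/
def res (k : ℕ) (n : ℤ) : ℕ := ((n + a k) % (Q k : ℤ)).toNat

lemma res_lt (hQ : ∀ k, 2 ≤ Q k) (k : ℕ) (n : ℤ) : res Q a k n < Q k := by
  have h0 : (0:ℤ) < (Q k : ℤ) := by exact_mod_cast Nat.lt_of_lt_of_le (by norm_num) (hQ k)
  have h1 := Int.emod_nonneg (n + a k) (ne_of_gt h0)
  have h2 := Int.emod_lt_of_pos (n + a k) h0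
  unfold res; omega

lemma key (hQ : ∀ k, 2 ≤ Q k) (k : ℕ) (n : ℤ) :
    (Q k : ℤ) * (par Q a k n) + (res Q a k n : ℤ) = n + a k := by
  have h0 : (0:ℤ) < (Q k : ℤ) := by exact_mod_cast Nat.lt_of_lt_of_le (by norm_num) (hQ k)
  have h1 := Int.emod_nonneg (n + a k) (ne_of_gt h0)
  have h2 := Int.mul_ediv_add_emod (n + a k) (Q k : ℤ)
  unfold par res; omega

lemma par_zero (ha : ∀ k, a k < Q k) (k : ℕ) : par Q a k 0 = 0 := by
  unfold par
  rw [zero_add]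
  exact Int.ediv_eq_zero_of_lt (by positivity) (by exact_mod_cast ha k)

lemma res_zero (ha : ∀ k, a k < Q k) (k : ℕ) : res Q a k 0 = a k := by
  unfold res
  rw [zero_add, Int.emod_eq_of_lt (by positivity) (by exact_mod_cast ha k)]
  simp

/-- trace of ancestors: `tr k n j` is the cell index at level `k+j` above cell `n` of level `k`. -/
def tr (k : ℕ) (n : ℤ) : ℕ → ℤ
  | 0 => n
  | j+1 => par Q a (k+j) (tr k n j)

lemma tr_shift (k : ℕ) (n : ℤ) (j : ℕ) :
    tr Q a k n (j+1) = tr Q a (k+1) (par Q a k n) j := by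
  induction j with
  | zero => rfl
  | succ j ih =>
      show par Q a (k+(j+1)) (tr Q a k n (j+1)) = par Q a ((k+1)+j) (tr Q a (k+1) (par Q a k n) j)
      rw [ih, show k+(j+1) = (k+1)+j by omega]

lemma tr_zero_add (ha : ∀ k, a k < Q k) (k : ℕ) (n : ℤ) (j : ℕ)
    (h : tr Q a k n j = 0) : ∀ d, tr Q a k n (j+d) = 0 := by
  intro d; induction d with
  | zero => exact h
  | succ d ih =>
      show par Q a (k+(j+d)) (tr Q a k n (j+d)) = 0
      rw [ih, par_zero Q a ha]

lemma par_natAbs_lt (hQ : ∀ k, 2 ≤ Q k) (ha : ∀ k, a k < Q k) (k : ℕ) (n : ℤ)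
    (hn : 2 ≤ n.natAbs) : (par Q a k n).natAbs < n.natAbs := by
  have hQ' : (2:ℤ) ≤ (Q k : ℤ) := by exact_mod_cast hQ k
  have ha' : (a k : ℤ) < (Q k : ℤ) := by exact_mod_cast ha k
  have ha0 : (0:ℤ) ≤ (a k : ℤ) := Int.ofNat_nonneg _
  have hr0 : (0:ℤ) ≤ (res Q a k n : ℤ) := Int.ofNat_nonneg _
  have hr1 : ((res Q a k n : ℤ)) < (Q k : ℤ) := by exact_mod_cast res_lt Q a hQ k n
  have hk := key Q a hQ k n
  set d := par Q a k n with hd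
  set r := (res Q a k n : ℤ)
  set q := (Q k : ℤ)
  rcases le_or_gt 2 n with h2 | h2
  · have hd0 : 0 ≤ d := by
      by_contra hc
      push_neg at hc
      have : q * d ≤ q * (-1) := mul_le_mul_of_nonneg_left (by omega) (by omega)
      omega
    have hdn : d < n := by
      by_contra hc
      push_neg at hc
      have h1 : q * n ≤ q * d := mul_le_mul_of_nonneg_left hc (by omega)
      have h2' : 2 * (q - 1) ≤ n * (q - 1) := mul_le_mul_of_nonneg_right h2 (by omega)
      nlinarith
    omega
  · have hn2 : n ≤ -2 := by omega
    have hd0 : d ≤ 0 := by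
      by_contra hc
      push_neg at hc
      have : q * 1 ≤ q * d := mul_le_mul_of_nonneg_left (by omega) (by omega)
      omega
    have hdn : n < d := by
      by_contra hc
      push_neg at hc
      have h1 : q * d ≤ q * n := mul_le_mul_of_nonneg_left hc (by omega)
      have h2' : n * (q - 1) ≤ (-2) * (q - 1) := mul_le_mul_of_nonneg_right hn2 (by omega)
      nlinarith
    omega

lemma par_one (hQ : ∀ k, 2 ≤ Q k) (ha : ∀ k, a k < Q k) (k : ℕ) :
    par Q a k 1 = 0 ∨ par Q a k 1 = 1 := by
  have hQ' : (2:ℤ) ≤ (Q k : ℤ) := by exact_mod_cast hQ k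
  have ha' : (a k : ℤ) < (Q k : ℤ) := by exact_mod_cast ha k
  rcases eq_or_lt_of_le (show (a k : ℤ) + 1 ≤ (Q k : ℤ) by omega) with h | h
  · right; unfold par
    rw [show (1 : ℤ) + a k = (Q k : ℤ) by omega]
    exact Int.ediv_self (by omega)
  · left; unfold par
    exact Int.ediv_eq_zero_of_lt (by positivity) (by omega)

lemma par_one_small (k : ℕ) (h : a k < Q k - 1) (hQ2 : 2 ≤ Q k) : par Q a k 1 = 0 := by
  have h' : (a k : ℤ) + 1 < (Q k : ℤ) := by exact_mod_cast (show a k + 1 < Q k by omega)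
  unfold par
  exact Int.ediv_eq_zero_of_lt (by positivity) (by omega)

lemma par_neg_one (hQ : ∀ k, 2 ≤ Q k) (ha : ∀ k, a k < Q k) (k : ℕ) :
    par Q a k (-1) = 0 ∨ par Q a k (-1) = -1 := by
  have hQ' : (2:ℤ) ≤ (Q k : ℤ) := by exact_mod_cast hQ k
  have ha' : (a k : ℤ) < (Q k : ℤ) := by exact_mod_cast ha k
  rcases Nat.eq_zero_or_pos (a k) with h | h
  · right; unfold par
    have h0 : (a k : ℤ) = 0 := by exact_mod_cast h
    rw [h0, add_zero]
    exact ((Int.ediv_emod_unique (a := (-1:ℤ)) (b := (Q k : ℤ)) (r := (Q k : ℤ) - 1)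
      (q := -1) (by omega)).mpr ⟨by ring, by omega, by omega⟩).1
  · left; unfold par
    have h0 : (1:ℤ) ≤ (a k : ℤ) := by exact_mod_cast h
    exact Int.ediv_eq_zero_of_lt (by omega) (by omega)

lemma exists_tr_zero (hQ : ∀ k, 2 ≤ Q k) (ha : ∀ k, a k < Q k)
    (hnd1 : ∀ n, ∃ k ≥ n, 0 < a k) (hnd2 : ∀ n, ∃ k ≥ n, a k < Q k - 1)
    (k : ℕ) (n : ℤ) : ∃ j, tr Q a k n j = 0 := by
  -- Step 1: descend to |n| ≤ 1
  have step1 : ∀ m : ℕ, ∀ k : ℕ, ∀ n : ℤ, n.natAbs ≤ m →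
      ∃ j, (tr Q a k n j).natAbs ≤ 1 := by
    intro m
    induction m with
    | zero => intro k n hn; exact ⟨0, by show n.natAbs ≤ 1; omega⟩
    | succ m ih =>
        intro k n hn
        rcases le_or_gt n.natAbs 1 with h | h
        · exact ⟨0, h⟩
        · have hlt := par_natAbs_lt Q a hQ ha k n (by omega)
          obtain ⟨j, hj⟩ := ih (k+1) (par Q a k n) (by omega)
          exact ⟨j+1, by rwa [tr_shift]⟩
  obtain ⟨j0, hj0⟩ := step1 n.natAbs k n le_rfl
  -- Step 2: states stay in {-1,0,1}
  have stay : ∀ d, -1 ≤ tr Q a k n (j0+d) ∧ tr Q a k n (j0+d) ≤ 1 := by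
    intro d; induction d with
    | zero => show -1 ≤ tr Q a k n j0 ∧ tr Q a k n j0 ≤ 1; omega
    | succ d ih =>
        show -1 ≤ par Q a (k+(j0+d)) (tr Q a k n (j0+d)) ∧
          par Q a (k+(j0+d)) (tr Q a k n (j0+d)) ≤ 1
        have hc : tr Q a k n (j0+d) = -1 ∨ tr Q a k n (j0+d) = 0 ∨
            tr Q a k n (j0+d) = 1 := by omega
        rcases hc with h | h | h <;> rw [h]
        · rcases par_neg_one Q a hQ ha (k+(j0+d)) with h' | h' <;> omega
        · rw [par_zero Q a ha]; omega
        · rcases par_one Q a hQ ha (k+(j0+d)) with h' | h' <;> omega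
  -- Step 3: use hnd1 to rule out -1
  obtain ⟨k1, hk1, ha1⟩ := hnd1 (k + j0)
  set j1 := k1 - k with hj1
  have stay01 : ∀ d, 0 ≤ tr Q a k n (j1+1+d) ∧ tr Q a k n (j1+1+d) ≤ 1 := by
    intro d; induction d with
    | zero =>
        show 0 ≤ par Q a (k+j1) (tr Q a k n j1) ∧ par Q a (k+j1) (tr Q a k n j1) ≤ 1
        have h2 := stay (j1 - j0)
        rw [show j0 + (j1 - j0) = j1 by omega] at h2
        have hc : tr Q a k n j1 = -1 ∨ tr Q a k n j1 = 0 ∨ tr Q a k n j1 = 1 := by omega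
        rcases hc with h | h | h <;> rw [h]
        · have h0 : (1:ℤ) ≤ (a (k+j1) : ℤ) := by
            rw [show k + j1 = k1 by omega]; exact_mod_cast ha1
          have ha' : (a (k+j1) : ℤ) < (Q (k+j1) : ℤ) := by exact_mod_cast ha (k+j1)
          have : par Q a (k+j1) (-1) = 0 := by
            unfold par
            exact Int.ediv_eq_zero_of_lt (by omega) (by omega)
          omega
        · rw [par_zero Q a ha]; omega
        · rcases par_one Q a hQ ha (k+j1) with h' | h' <;> omega
    | succ d ih =>
        show 0 ≤ par Q a (k+(j1+1+d)) (tr Q a k n (j1+1+d)) ∧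
          par Q a (k+(j1+1+d)) (tr Q a k n (j1+1+d)) ≤ 1
        have hc : tr Q a k n (j1+1+d) = 0 ∨ tr Q a k n (j1+1+d) = 1 := by omega
        rcases hc with h | h <;> rw [h]
        · rw [par_zero Q a ha]; omega
        · rcases par_one Q a hQ ha (k+(j1+1+d)) with h' | h' <;> omega
  -- Step 4: use hnd2 to kill 1
  obtain ⟨k2, hk2, ha2⟩ := hnd2 (k + j1 + 1)
  set j2 := k2 - k with hj2
  refine ⟨j2 + 1, ?_⟩
  show par Q a (k+j2) (tr Q a k n j2) = 0
  have h2 := stay01 (j2 - (j1+1))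
  rw [show j1 + 1 + (j2 - (j1+1)) = j2 by omega] at h2
  have hsm : a (k+j2) < Q (k+j2) - 1 := by rw [show k + j2 = k2 by omega]; exact ha2
  have hc : tr Q a k n j2 = 0 ∨ tr Q a k n j2 = 1 := by omega
  rcases hc with h | h <;> rw [h]
  · exact par_zero Q a ha (k+j2)
  · exact par_one_small Q a (k+j2) hsm (hQ (k+j2))

variable (S : ℕ → Type) (φ : ∀ k, S (k + 1) → (Fin (Q k) → S k))

/-- decode a value at level `k+j`, cell `tr k n j`, down to level `k`, cell `n`. -/
def down (hQ : ∀ k, 2 ≤ Q k) (k : ℕ) : ∀ j : ℕ, ℤ → S (k + j) → S k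
  | 0, _, t => t
  | j+1, n, t =>
      down hQ k j n (φ (k+j) t ⟨res Q a (k+j) (tr Q a k n j), res_lt Q a hQ (k+j) _⟩)

lemma phi_congr {A B : ℕ} (e : A = B) (t : S (A+1)) (t' : S (B+1)) (ht : HEq t t')
    (i : Fin (Q A)) (i' : Fin (Q B)) (hi : (i : ℕ) = (i' : ℕ)) :
    HEq (φ A t i) (φ B t' i') := by
  subst e
  cases eq_of_heq ht
  cases Fin.ext hi
  rfl

lemma down_par (hQ : ∀ k, 2 ≤ Q k) :
    ∀ (j k : ℕ) (n : ℤ) (t : S (k+(j+1))) (t' : S ((k+1)+j)), HEq t t' →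
      down Q a S φ hQ k (j+1) n t
        = φ k (down Q a S φ hQ (k+1) j (par Q a k n) t')
              ⟨res Q a k n, res_lt Q a hQ k n⟩ := by
  intro j
  induction j with
  | zero =>
      intro k n t t' ht
      cases eq_of_heq ht
      rfl
  | succ j ih =>
      intro k n t t' ht
      show down Q a S φ hQ k (j+1) n
          (φ (k+(j+1)) t ⟨res Q a (k+(j+1)) (tr Q a k n (j+1)), _⟩) = _
      rw [ih k n _ (φ ((k+1)+j) t' ⟨res Q a ((k+1)+j) (tr Q a (k+1) (par Q a k n) j),
          res_lt Q a hQ ((k+1)+j) _⟩) ?_]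
      · rfl
      · apply phi_congr Q S φ (show k+(j+1) = (k+1)+j by omega) t t' ht
        show res Q a (k+(j+1)) (tr Q a k n (j+1)) = res Q a ((k+1)+j) _
        rw [tr_shift, show k+(j+1) = (k+1)+j by omega]

lemma down_stable (hQ : ∀ k, 2 ≤ Q k) (ha : ∀ k, a k < Q k) (s : ∀ k, S k)
    (hfit : ∀ k, φ k (s (k + 1)) ⟨a k, ha k⟩ = s k)
    (k : ℕ) (n : ℤ) (j : ℕ) (h : tr Q a k n j = 0) :
    ∀ d, down Q a S φ hQ k (j+d) n (s (k+(j+d))) = down Q a S φ hQ k j n (s (k+j)) := by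
  intro d; induction d with
  | zero => rfl
  | succ d ih =>
      have hz : tr Q a k n (j+d) = 0 := tr_zero_add Q a ha k n j h d
      have heq : down Q a S φ hQ k (j+(d+1)) n (s (k+(j+(d+1))))
          = down Q a S φ hQ k (j+d) n
              (φ (k+(j+d)) (s (k+(j+d)+1))
                ⟨res Q a (k+(j+d)) (tr Q a k n (j+d)), res_lt Q a hQ (k+(j+d)) _⟩) := rfl
      rw [heq]
      have hfin : (⟨res Q a (k+(j+d)) (tr Q a k n (j+d)), res_lt Q a hQ (k+(j+d)) _⟩ :
          Fin (Q (k+(j+d)))) = ⟨a (k+(j+d)), ha (k+(j+d))⟩ := by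
        apply Fin.ext
        show res Q a (k+(j+d)) (tr Q a k n (j+d)) = a (k+(j+d))
        rw [hz, res_zero Q a ha]
      rw [hfin, hfit (k+(j+d))]
      exact ih

lemma down_indep (hQ : ∀ k, 2 ≤ Q k) (ha : ∀ k, a k < Q k) (s : ∀ k, S k)
    (hfit : ∀ k, φ k (s (k + 1)) ⟨a k, ha k⟩ = s k)
    (k : ℕ) (n : ℤ) (j j' : ℕ) (h : tr Q a k n j = 0) (h' : tr Q a k n j' = 0) :
    down Q a S φ hQ k j n (s (k+j)) = down Q a S φ hQ k j' n (s (k+j')) := by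
  rcases le_total j j' with hle | hle
  · obtain ⟨d, rfl⟩ := Nat.exists_eq_add_of_le hle
    exact (down_stable Q a S φ hQ ha s hfit k n j h d).symm
  · obtain ⟨d, rfl⟩ := Nat.exists_eq_add_of_le hle
    exact down_stable Q a S φ hQ ha s hfit k n j' h' d

end HCFaux

open HCFaux

/-- Existence of the hierarchical configuration belonging to a fitted sequence:
given a hierarchical code `(S_k, Q_k, φ_k)` with a non-degenerate address
sequence `(a_k)` and a fitted sequence `(s_k, a_k)` (i.e.
`φ_k(s_{k+1})(a_k) = s_k`), there are configurations `ζ_k` (indexed by cell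
number; the cell `y` of level `k` sits at site `o_k + y B_k`) such that each
`ζ_k` is the encoding of `ζ_{k+1}` (the level-`k+1` cell `x` occupies the
level-`k` cells `x Q_k + i − a_k`, `0 ≤ i < Q_k`) and `ζ_k(0) = s_k`
(cell `0` of level `k` is at site `o_k`). -/
theorem hierarchical_code_fitted_configuration
    (S : ℕ → Type) (Q : ℕ → ℕ) (hQ : ∀ k, 2 ≤ Q k)
    (φ : ∀ k, S (k + 1) → (Fin (Q k) → S k))
    (a : ℕ → ℕ) (ha : ∀ k, a k < Q k)
    (hnd1 : ∀ n, ∃ k ≥ n, 0 < a k)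
    (hnd2 : ∀ n, ∃ k ≥ n, a k < Q k - 1)
    (s : ∀ k, S k)
    (hfit : ∀ k, φ k (s (k + 1)) ⟨a k, ha k⟩ = s k) :
    ∃ ζ : ∀ k, ℤ → S k,
      (∀ (k : ℕ) (x : ℤ) (i : Fin (Q k)),
         ζ k (x * (Q k : ℤ) + (i.val : ℤ) - (a k : ℤ)) = φ k (ζ (k + 1) x) i) ∧
      (∀ k, ζ k 0 = s k) := by
  have ex : ∀ k n, ∃ j, tr Q a k n j = 0 := exists_tr_zero Q a hQ ha hnd1 hnd2
  refine ⟨fun k n => down Q a S φ hQ k (Nat.find (ex k n)) n (s (k + Nat.find (ex k n))), ?_, ?_⟩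
  · intro k x i
    beta_reduce
    set n : ℤ := x * (Q k : ℤ) + (i.val : ℤ) - (a k : ℤ) with hn
    have hQ0 : (0:ℤ) < (Q k : ℤ) := by exact_mod_cast Nat.lt_of_lt_of_le (by norm_num) (hQ k)
    have hQ' : ((Q k : ℤ)) ≠ 0 := by omega
    have hpar : par Q a k n = x := by
      unfold par
      rw [show n + (a k : ℤ) = (i.val : ℤ) + x * (Q k : ℤ) by rw [hn]; ring]
      rw [Int.add_mul_ediv_right _ _ hQ',
        Int.ediv_eq_zero_of_lt (Int.ofNat_nonneg _) (by exact_mod_cast i.isLt), zero_add]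
    have hres : res Q a k n = i.val := by
      unfold res
      rw [show n + (a k : ℤ) = (i.val : ℤ) + x * (Q k : ℤ) by rw [hn]; ring]
      rw [Int.add_mul_emod_self_right, Int.emod_eq_of_lt (Int.ofNat_nonneg _)
        (by exact_mod_cast i.isLt)]
      simp
    set j' := Nat.find (ex (k+1) x) with hj'
    have hj'0 : tr Q a (k+1) x j' = 0 := Nat.find_spec (ex (k+1) x)
    have htr : tr Q a k n (j'+1) = 0 := by
      rw [tr_shift, hpar]; exact hj'0
    have h1 : down Q a S φ hQ k (Nat.find (ex k n)) n (s (k + Nat.find (ex k n)))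
        = down Q a S φ hQ k (j'+1) n (s (k+(j'+1))) :=
      down_indep Q a S φ hQ ha s hfit k n _ _ (Nat.find_spec (ex k n)) htr
    rw [h1]
    have heqs : HEq (s (k+(j'+1))) (s ((k+1)+j')) := by
      rw [show k+(j'+1) = (k+1)+j' by omega]
    rw [down_par Q a S φ hQ j' k n _ (s ((k+1)+j')) heqs, hpar]
    congr 1
    exact Fin.ext hres
  · intro k
    beta_reduce
    exact down_indep Q a S φ hQ ha s hfit k 0 (Nat.find (ex k 0)) 0 (Nat.find_spec (ex k 0)) rfl
end

section
/- For a hierarchical code with a primitive shared field Ψ = (S_k, Q_k, φ_{k*}, F^k, γ_k, a_k)_{k≥1} — where in each code φ_{k*}, field F^k over address {a_k} is identified with F^{k+1}, and F^k controls address a_k via γ_k — for every value u₁ ∈ S₁.F¹ the infinite sequence (s_k, a_k)_{k≥1} with s_k = γ_k(u₁) is fitted, i.e., φ_{k*}(s_{k+1})(a_k) = s_k for all k. -/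
/-- For a hierarchical code with a primitive shared field — in each code
`φ_k`, the field `F^k` at address `a_k` is identified with `F^{k+1}`
(`Fld k (φ k s (a k)) = Fld (k+1) s`) and `F^k` controls address `a_k` via
`γ_k` (every field value occurs there, and the field value at `a_k` determines
the whole symbol via `γ_k`) — for every value `u₁` of the field the sequence
`s_k = γ_k(u₁)` is fitted: `φ_k(γ_{k+1}(u₁))(a_k) = γ_k(u₁)` for all `k`. -/
theorem primitive_shared_field_fitted
    (S : ℕ → Type) (V : Type) (Q : ℕ → ℕ)
    (φ : ∀ k, S (k + 1) → (Fin (Q k) → S k))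
    (a : ℕ → ℕ) (ha : ∀ k, a k < Q k)
    (Fld : ∀ k, S k → V) (γ : ∀ k, V → S k)
    (hident : ∀ k (s : S (k + 1)), Fld k (φ k s ⟨a k, ha k⟩) = Fld (k + 1) s)
    (hcontrol1 : ∀ k (r : V), ∃ s : S (k + 1), Fld k (φ k s ⟨a k, ha k⟩) = r)
    (hcontrol2 : ∀ k (s : S (k + 1)),
      φ k s ⟨a k, ha k⟩ = γ k (Fld k (φ k s ⟨a k, ha k⟩))) :
    ∀ (u₁ : V) (k : ℕ), φ k (γ (k + 1) u₁) ⟨a k, ha k⟩ = γ k u₁ := by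
  have hγ : ∀ k (r : V), Fld k (γ k r) = r := by
    intro k r
    obtain ⟨s, hs⟩ := hcontrol1 k r
    have h2 := hcontrol2 k s
    rw [hs] at h2
    rw [← h2, hs]
  intro u₁ k
  rw [hcontrol2 k (γ (k + 1) u₁), hident, hγ]
end

section
/- Simulation damage probability bound: let V = [−B/4, B/4) × (−T•/4, 0] and V* the corresponding rectangle for the simulated medium with parameters B*, T•*. Define damage in the simulated configuration η* to occur at (x,t) iff the damage set of η contains two points u, v with u+2V and v+2V disjoint and u+3V, v+3V both contained in (x,t) + 4V* + (B*/2, 0). If in η each translated rectangle w + 2V (w in space-time) contains damage with probability at most ε, independently over any finite family of disjoint such rectangles (in the sense that the probability that all of them contain damage is at most ε raised to the number of rectangles), and if ε* ≥ 25((B*/B)(T•*/T•) ε)², then for every rectangle 2V* the probability that the simulated damage intersects V* is at most ε*; indeed it is bounded by n ε² where n < 25((B*/B)(T•*/T•))² counts pairs of disjoint lattice translates of 2V contained in 5V* + (B*/2, 0). -/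
open MeasureTheory Pointwise

private lemma smul_rect (a Bb Tt : ℝ) (ha : 0 < a) :
    a • {p : ℝ × ℝ | -Bb / 4 ≤ p.1 ∧ p.1 < Bb / 4 ∧ -Tt / 4 < p.2 ∧ p.2 ≤ 0} =
    {p : ℝ × ℝ | -(a*Bb) / 4 ≤ p.1 ∧ p.1 < a*Bb / 4 ∧ -(a*Tt) / 4 < p.2 ∧ p.2 ≤ 0} := by
  ext ⟨x, y⟩
  constructor
  · rintro ⟨⟨px, py⟩, ⟨h1, h2, h3, h4⟩, heq⟩
    have hx : a * px = x := congrArg Prod.fst heq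
    have hy : a * py = y := congrArg Prod.snd heq
    refine ⟨?_, ?_, ?_, ?_⟩ <;> simp only [] <;> nlinarith
  · rintro ⟨h1, h2, h3, h4⟩
    simp only [] at h1 h2 h3 h4
    refine ⟨(x / a, y / a), ⟨?_, ?_, ?_, ?_⟩, ?_⟩
    · show -Bb / 4 ≤ x / a
      rw [le_div_iff₀ ha]; nlinarith
    · show x / a < Bb / 4
      rw [div_lt_iff₀ ha]; nlinarith
    · show -Tt / 4 < y / a
      rw [lt_div_iff₀ ha]; nlinarith
    · show y / a ≤ 0
      exact div_nonpos_of_nonpos_of_nonneg h4 ha.le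
    · show (a * (x / a), a * (y / a)) = (x, y)
      field_simp

private lemma sum_abs_window (K : ℤ) : ∀ n : ℕ,
    (∑ d ∈ Finset.Icc (-(n:ℤ)) (n:ℤ), (K - |d|)) = (2*n+1)*K - n*(n+1) := by
  intro n
  induction n with
  | zero => simp
  | succ m ih =>
    have hins : Finset.Icc (-((m+1:ℕ):ℤ)) ((m+1:ℕ):ℤ) =
        insert (-((m+1:ℕ):ℤ)) (insert ((m+1:ℕ):ℤ) (Finset.Icc (-(m:ℕ):ℤ) (m:ℕ))) := by
      ext d; simp only [Finset.mem_Icc, Finset.mem_insert]; push_cast; omega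
    rw [hins, Finset.sum_insert, Finset.sum_insert, ih]
    · have h1 : |(-((m+1:ℕ):ℤ))| = ((m+1:ℕ):ℤ) := by
        rw [abs_neg]; exact abs_of_nonneg (by positivity)
      have h2 : |((m+1:ℕ):ℤ)| = ((m+1:ℕ):ℤ) := abs_of_nonneg (by positivity)
      rw [h1, h2]; push_cast; ring
    · simp only [Finset.mem_Icc]; push_cast; omega
    · simp only [Finset.mem_insert, Finset.mem_Icc]; push_cast; omega

private lemma card_window (lo hi : ℤ) (n : ℕ) (hn : (n:ℤ) ≤ hi - lo) :
    ((((Finset.Icc lo hi) ×ˢ (Finset.Icc lo hi)).filter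
      (fun q => |q.1 - q.2| ≤ (n:ℤ))).card : ℤ) ≤ (2*n+1)*(hi - lo + 1) - n*(n+1) := by
  classical
  have hsub : (((Finset.Icc lo hi) ×ˢ (Finset.Icc lo hi)).filter
      (fun q => |q.1 - q.2| ≤ (n:ℤ))) ⊆
      (Finset.Icc (-(n:ℤ)) (n:ℤ)).biUnion
        (fun d => (Finset.Icc (max lo (lo + d)) (min hi (hi + d))).image (fun x => (x, x - d))) := by
    intro ⟨x, y⟩ hq
    simp only [Finset.mem_filter, Finset.mem_product, Finset.mem_Icc] at hq
    obtain ⟨⟨⟨hx1, hx2⟩, ⟨hy1, hy2⟩⟩, habs⟩ := hq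
    rw [abs_le] at habs
    refine Finset.mem_biUnion.mpr ⟨x - y, Finset.mem_Icc.mpr ⟨by omega, by omega⟩, ?_⟩
    refine Finset.mem_image.mpr ⟨x, Finset.mem_Icc.mpr ?_, by rw [sub_sub_cancel]⟩
    rw [max_le_iff, le_min_iff]
    refine ⟨⟨by omega, by omega⟩, by omega, by omega⟩
  calc ((((Finset.Icc lo hi) ×ˢ (Finset.Icc lo hi)).filter
      (fun q => |q.1 - q.2| ≤ (n:ℤ))).card : ℤ)
      ≤ ((((Finset.Icc (-(n:ℤ)) (n:ℤ)).biUnion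
        (fun d => (Finset.Icc (max lo (lo + d)) (min hi (hi + d))).image (fun x => (x, x - d)))).card) : ℤ) := by
        exact_mod_cast Int.ofNat_le.mpr (Finset.card_le_card hsub)
    _ ≤ ∑ d ∈ Finset.Icc (-(n:ℤ)) (n:ℤ),
          (((Finset.Icc (max lo (lo + d)) (min hi (hi + d))).image (fun x => (x, x - d))).card : ℤ) := by
        exact_mod_cast Int.ofNat_le.mpr (Finset.card_biUnion_le)
    _ ≤ ∑ d ∈ Finset.Icc (-(n:ℤ)) (n:ℤ), ((hi - lo + 1) - |d|) := by
        apply Finset.sum_le_sum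
        intro d hd
        simp only [Finset.mem_Icc] at hd
        calc (((Finset.Icc (max lo (lo + d)) (min hi (hi + d))).image (fun x => (x, x - d))).card : ℤ)
            ≤ ((Finset.Icc (max lo (lo + d)) (min hi (hi + d))).card : ℤ) := by
              exact_mod_cast Int.ofNat_le.mpr (Finset.card_image_le)
          _ ≤ (hi - lo + 1) - |d| := by
              rw [Int.card_Icc]
              rcases abs_cases d with ⟨he, h0⟩ | ⟨he, h0⟩ <;> rw [he] <;> omega
    _ = (2*n+1)*(hi - lo + 1) - n*(n+1) := sum_abs_window _ n

set_option maxHeartbeats 2000000 in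

private lemma numeric_h (b : ℝ) (hb : 1 ≤ b) (ib it : ℤ) (E : ℕ)
    (hib : 1/4 - 3*b/4 < (ib:ℝ)) (hit : (it:ℝ) < 7*b/4 - 1/4)
    (hK : ib ≤ it) (hE1 : (E:ℤ) ≤ it - ib) (hE2 : (E:ℝ) < 2*b - 1/2) :
    (2*(E:ℝ)+1)*((it:ℝ) - (ib:ℝ) + 1) - (E:ℝ)*((E:ℝ)+1) ≤ 7*b^2 := by
  have hE1' : (E:ℝ) ≤ (it:ℝ) - (ib:ℝ) := by exact_mod_cast hE1
  have hE0 : (0:ℝ) ≤ (E:ℝ) := Nat.cast_nonneg E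
  by_cases hcase : (17:ℝ)/8 ≤ b
  · have hKr : (it:ℝ) - (ib:ℝ) + 1 < 5*b/2 + 1/2 := by linarith
    nlinarith [mul_nonneg (by linarith : (0:ℝ) ≤ 2*(E:ℝ)+1)
        (by linarith : (0:ℝ) ≤ 5*b/2 + 1/2 - ((it:ℝ) - (ib:ℝ) + 1)),
      mul_nonneg (by linarith : (0:ℝ) ≤ 2*b - 1/2 - (E:ℝ))
        (by linarith : (0:ℝ) ≤ 3*b + 1/2 - (E:ℝ)),
      sq_nonneg (b - 17/8)]
  · push_neg at hcase
    have hit3 : it ≤ 3 := by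
      have h4 : (it:ℝ) < 4 := by linarith
      have : it < 4 := by exact_mod_cast h4
      omega
    have hib1 : -1 ≤ ib := by
      have h2 : (-2:ℝ) < (ib:ℝ) := by linarith
      have : (-2:ℤ) < ib := by exact_mod_cast h2
      omega
    have hE3 : E ≤ 3 := by
      have h4 : (E:ℝ) < 4 := by linarith
      have : E < 4 := by exact_mod_cast h4
      omega
    have hEit : E ≤ (it - ib).toNat := by omega
    have hib3 : ib ≤ 3 := le_trans hK hit3
    interval_cases ib <;> interval_cases it <;> interval_cases E <;>
      (try clear hEit hE3 hit3 hib1 hib3 hcase hK hE1 hE0 hE1') <;>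
      push_cast <;>
      first
        | nlinarith [sq_nonneg (b - 1)]
        | nlinarith [sq_nonneg (b - 9/7)]
        | nlinarith [sq_nonneg (b - 5/3)]
        | nlinarith [sq_nonneg (b - 13/7)]

set_option maxHeartbeats 2000000 in
private lemma numeric_v (t : ℝ) (ht : 1 ≤ t) (jb : ℤ) (E : ℕ)
    (hjb : 3/2 - 5*t/2 < (jb:ℝ)) (hjb0 : jb ≤ 0)
    (hE1 : (E:ℤ) ≤ 0 - jb) (hE2 : (E:ℝ) < 2*t - 1/2) :
    (2*(E:ℝ)+1)*(0 - (jb:ℝ) + 1) - (E:ℝ)*((E:ℝ)+1) ≤ 7*t^2 := by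
  have hE1' : (E:ℝ) ≤ 0 - (jb:ℝ) := by exact_mod_cast hE1
  have hE0 : (0:ℝ) ≤ (E:ℝ) := Nat.cast_nonneg E
  by_cases hcase : (17:ℝ)/8 ≤ t
  · have hKr : 0 - (jb:ℝ) + 1 < 5*t/2 + 1/2 := by linarith
    nlinarith [mul_nonneg (by linarith : (0:ℝ) ≤ 2*(E:ℝ)+1)
        (by linarith : (0:ℝ) ≤ 5*t/2 + 1/2 - (0 - (jb:ℝ) + 1)),
      mul_nonneg (by linarith : (0:ℝ) ≤ 2*t - 1/2 - (E:ℝ))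
        (by linarith : (0:ℝ) ≤ 3*t + 1/2 - (E:ℝ)),
      sq_nonneg (t - 17/8)]
  · push_neg at hcase
    have hjb1 : -3 ≤ jb := by
      have h2 : (-4:ℝ) < (jb:ℝ) := by linarith
      have : (-4:ℤ) < jb := by exact_mod_cast h2
      omega
    have hE3 : E ≤ 3 := by
      have h4 : (E:ℝ) < 4 := by linarith
      have : E < 4 := by exact_mod_cast h4
      omega
    interval_cases jb <;> interval_cases E <;>
      (try clear hjb1 hE3 hcase hE1 hE0 hE1') <;>
      push_cast <;>
      first
        | nlinarith [sq_nonneg (t - 1)]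
        | nlinarith [sq_nonneg (t - 7/5)]
        | nlinarith [sq_nonneg (t - 9/5)]

private lemma mem_vadd' (x q : ℝ × ℝ) (S : Set (ℝ × ℝ)) :
    q ∈ x +ᵥ S ↔ (q.1 - x.1, q.2 - x.2) ∈ S := by
  rw [Set.mem_vadd_set_iff_neg_vadd_mem]
  have h : -x +ᵥ q = (q.1 - x.1, q.2 - x.2) := by
    show -x + q = _
    rw [Prod.ext_iff]
    constructor <;> simp <;> ring
  rw [h]

private lemma tile_mem {B T : ℝ} (hB : 0 < B) (hT : 0 < T) (w u : ℝ × ℝ) :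
    u ∈ (((w.1 + (⌊(u.1 - w.1)/B + 1/2⌋ : ℤ)*B, w.2 + (⌈(u.2 - w.2)/(T/2)⌉ : ℤ)*(T/2)) : ℝ × ℝ) +ᵥ
      {q : ℝ × ℝ | -(2*B) / 4 ≤ q.1 ∧ q.1 < 2*B / 4 ∧ -(2*T) / 4 < q.2 ∧ q.2 ≤ 0}) := by
  rw [mem_vadd']
  have hxu : ((u.1 - w.1)/B) * B = u.1 - w.1 := div_mul_cancel₀ _ hB.ne'
  have hyu : ((u.2 - w.2)/(T/2)) * (T/2) = u.2 - w.2 := div_mul_cancel₀ _ (by linarith)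
  have hf1 : ((⌊(u.1 - w.1)/B + 1/2⌋ : ℤ) : ℝ) ≤ (u.1 - w.1)/B + 1/2 := Int.floor_le _
  have hf2 : (u.1 - w.1)/B + 1/2 - 1 < ((⌊(u.1 - w.1)/B + 1/2⌋ : ℤ) : ℝ) := Int.sub_one_lt_floor _
  have hc1 : (u.2 - w.2)/(T/2) ≤ ((⌈(u.2 - w.2)/(T/2)⌉ : ℤ) : ℝ) := Int.le_ceil _
  have hc2 : ((⌈(u.2 - w.2)/(T/2)⌉ : ℤ) : ℝ) < (u.2 - w.2)/(T/2) + 1 := Int.ceil_lt_add_one _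
  have e1 : ((⌊(u.1 - w.1)/B + 1/2⌋ : ℤ) : ℝ) * B ≤ ((u.1 - w.1)/B + 1/2) * B :=
    mul_le_mul_of_nonneg_right hf1 hB.le
  have e2 : ((u.1 - w.1)/B - 1/2) * B < ((⌊(u.1 - w.1)/B + 1/2⌋ : ℤ) : ℝ) * B := by
    apply mul_lt_mul_of_pos_right _ hB; linarith
  have e3 : ((u.2 - w.2)/(T/2)) * (T/2) ≤ ((⌈(u.2 - w.2)/(T/2)⌉ : ℤ) : ℝ) * (T/2) :=
    mul_le_mul_of_nonneg_right hc1 (by linarith)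
  have e4 : ((⌈(u.2 - w.2)/(T/2)⌉ : ℤ) : ℝ) * (T/2) < ((u.2 - w.2)/(T/2) + 1) * (T/2) := by
    apply mul_lt_mul_of_pos_right hc2; linarith
  refine ⟨?_, ?_, ?_, ?_⟩ <;> simp only [] <;> nlinarith [hxu, hyu]

private lemma tiles_disjoint {B T : ℝ} (hB : 0 < B) (hT : 0 < T) (w : ℝ × ℝ) (a b : ℤ × ℤ)
    (hab : a ≠ b) :
    Disjoint
      ((((w.1 + a.1*B, w.2 + a.2*(T/2)) : ℝ × ℝ)) +ᵥ
        {q : ℝ × ℝ | -(2*B) / 4 ≤ q.1 ∧ q.1 < 2*B / 4 ∧ -(2*T) / 4 < q.2 ∧ q.2 ≤ 0})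
      ((((w.1 + b.1*B, w.2 + b.2*(T/2)) : ℝ × ℝ)) +ᵥ
        {q : ℝ × ℝ | -(2*B) / 4 ≤ q.1 ∧ q.1 < 2*B / 4 ∧ -(2*T) / 4 < q.2 ∧ q.2 ≤ 0}) := by
  rw [Set.disjoint_left]
  intro x hxa hxb
  rw [mem_vadd'] at hxa hxb
  obtain ⟨a1, a2, a3, a4⟩ := hxa
  obtain ⟨b1, b2, b3, b4⟩ := hxb
  simp only [] at a1 a2 a3 a4 b1 b2 b3 b4
  by_cases h : a.1 = b.1
  · have h2 : a.2 ≠ b.2 := fun h2 => hab (Prod.ext h h2)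
    have hd : (1:ℤ) ≤ |a.2 - b.2| := Int.one_le_abs (sub_ne_zero_of_ne h2)
    have hd' : (1:ℝ) ≤ |((a.2:ℝ)) - ((b.2:ℝ))| := by exact_mod_cast hd
    rcases abs_cases ((a.2:ℝ) - (b.2:ℝ)) with ⟨he, -⟩ | ⟨he, -⟩ <;> rw [he] at hd' <;>
      nlinarith [hT]
  · have hd : (1:ℤ) ≤ |a.1 - b.1| := Int.one_le_abs (sub_ne_zero_of_ne h)
    have hd' : (1:ℝ) ≤ |((a.1:ℝ)) - ((b.1:ℝ))| := by exact_mod_cast hd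
    rcases abs_cases ((a.1:ℝ) - (b.1:ℝ)) with ⟨he, -⟩ | ⟨he, -⟩ <;> rw [he] at hd' <;>
      nlinarith [hB]

private lemma same_tile_not_disjoint {B T : ℝ} (hB : 0 < B) (hT : 0 < T) (u v : ℝ × ℝ)
    (h1 : |u.1 - v.1| < B) (h2 : |u.2 - v.2| < T/2) :
    ¬ Disjoint
      (u +ᵥ {q : ℝ × ℝ | -(2*B) / 4 ≤ q.1 ∧ q.1 < 2*B / 4 ∧ -(2*T) / 4 < q.2 ∧ q.2 ≤ 0})
      (v +ᵥ {q : ℝ × ℝ | -(2*B) / 4 ≤ q.1 ∧ q.1 < 2*B / 4 ∧ -(2*T) / 4 < q.2 ∧ q.2 ≤ 0}) := by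
  rw [abs_lt] at h1 h2
  intro hdisj
  have hq1 : ((u.1 + v.1)/2, min u.2 v.2) ∈
      u +ᵥ {q : ℝ × ℝ | -(2*B) / 4 ≤ q.1 ∧ q.1 < 2*B / 4 ∧ -(2*T) / 4 < q.2 ∧ q.2 ≤ 0} := by
    rw [mem_vadd']
    refine ⟨by simp only []; linarith, by simp only []; linarith, ?_, ?_⟩ <;> simp only []
    · rcases min_cases u.2 v.2 with ⟨he, -⟩ | ⟨he, -⟩ <;> rw [he] <;> linarith
    · have := min_le_left u.2 v.2; linarith
  have hq2 : ((u.1 + v.1)/2, min u.2 v.2) ∈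
      v +ᵥ {q : ℝ × ℝ | -(2*B) / 4 ≤ q.1 ∧ q.1 < 2*B / 4 ∧ -(2*T) / 4 < q.2 ∧ q.2 ≤ 0} := by
    rw [mem_vadd']
    refine ⟨by simp only []; linarith, by simp only []; linarith, ?_, ?_⟩ <;> simp only []
    · rcases min_cases u.2 v.2 with ⟨he, -⟩ | ⟨he, -⟩ <;> rw [he] <;> linarith
    · have := min_le_right u.2 v.2; linarith
  exact Set.disjoint_left.mp hdisj hq1 hq2

private lemma u_bounds {B T Bs Ts : ℝ} (hB : 0 < B) (hT : 0 < T)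
    (hBs : 0 < Bs) (hTs : 0 < Ts) (p u : ℝ × ℝ)
    (hsub : (u +ᵥ {q : ℝ × ℝ | -(3*B) / 4 ≤ q.1 ∧ q.1 < 3*B / 4 ∧ -(3*T) / 4 < q.2 ∧ q.2 ≤ 0}) ⊆
      ((p + ((Bs / 2, 0) : ℝ × ℝ)) +ᵥ
        {q : ℝ × ℝ | -(4*Bs) / 4 ≤ q.1 ∧ q.1 < 4*Bs / 4 ∧ -(4*Ts) / 4 < q.2 ∧ q.2 ≤ 0})) :
    (p.1 - Bs/2 + 3*B/4 ≤ u.1 ∧ u.1 + 3*B/4 ≤ p.1 + 3*Bs/2) ∧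
      (p.2 - Ts + 3*T/4 ≤ u.2 ∧ u.2 ≤ p.2) := by
  have hc1 : (p + ((Bs / 2, 0) : ℝ × ℝ)).1 = p.1 + Bs/2 := rfl
  have hc2 : (p + ((Bs / 2, 0) : ℝ × ℝ)).2 = p.2 + 0 := rfl
  -- first test point
  have h1 : (u.1 - 3*B/4, u.2) ∈ u +ᵥ {q : ℝ × ℝ | -(3*B) / 4 ≤ q.1 ∧ q.1 < 3*B / 4 ∧ -(3*T) / 4 < q.2 ∧ q.2 ≤ 0} := by
    rw [mem_vadd']
    refine ⟨by simp; linarith, by simp; linarith, by simp; linarith, by simp⟩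
  have h1' := hsub h1
  rw [mem_vadd', hc1, hc2] at h1'
  obtain ⟨ha1, -, ha3, ha4⟩ := h1'
  simp only [] at ha1 ha3 ha4
  refine ⟨⟨by linarith, ?_⟩, ⟨?_, by linarith⟩⟩
  · -- upper bound on u.1
    by_contra hcon
    push_neg at hcon
    have h2 : (max (p.1 + 3*Bs/2) (u.1 - 3*B/4), u.2) ∈ u +ᵥ {q : ℝ × ℝ | -(3*B) / 4 ≤ q.1 ∧ q.1 < 3*B / 4 ∧ -(3*T) / 4 < q.2 ∧ q.2 ≤ 0} := by
      rw [mem_vadd']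
      refine ⟨?_, ?_, by simp; linarith, by simp⟩
      · simp only []
        have := le_max_right (p.1 + 3*Bs/2) (u.1 - 3*B/4)
        linarith
      · simp only []
        have h := max_lt (show p.1 + 3*Bs/2 < u.1 + 3*B/4 by linarith)
          (show u.1 - 3*B/4 < u.1 + 3*B/4 by linarith)
        linarith
    have h2' := hsub h2
    rw [mem_vadd', hc1, hc2] at h2'
    obtain ⟨-, hb2, -, -⟩ := h2'
    simp only [] at hb2
    have := le_max_left (p.1 + 3*Bs/2) (u.1 - 3*B/4)
    linarith
  · -- lower bound on u.2
    by_contra hcon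
    push_neg at hcon
    have h3 : (u.1, min (p.2 - Ts) u.2) ∈ u +ᵥ {q : ℝ × ℝ | -(3*B) / 4 ≤ q.1 ∧ q.1 < 3*B / 4 ∧ -(3*T) / 4 < q.2 ∧ q.2 ≤ 0} := by
      rw [mem_vadd']
      refine ⟨by simp; linarith, by simp; linarith, ?_, ?_⟩
      · simp only []
        have h := lt_min (show u.2 - 3*T/4 < p.2 - Ts by linarith)
          (show u.2 - 3*T/4 < u.2 by linarith)
        linarith
      · simp only []
        have := min_le_right (p.2 - Ts) u.2
        linarith
    have h3' := hsub h3
    rw [mem_vadd', hc1, hc2] at h3'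
    obtain ⟨-, -, hb3, -⟩ := h3'
    simp only [] at hb3
    have := min_le_left (p.2 - Ts) u.2
    linarith

set_option maxHeartbeats 2000000 in
/-- Simulation Damage Probability Bound.  `V = [−B/4, B/4) × (−T•/4, 0]` and
`V*` is the corresponding rectangle of the simulated medium.  Damage of the
simulated configuration occurs at `p` iff the damage of `η` contains two
points `u`, `v` with `u+2V`, `v+2V` disjoint and `u+3V`, `v+3V` contained in
`p + 4V* + (B*/2, 0)`.  If for every finite family of pairwise disjoint
translates `w + 2V` the probability that all of them meet the damage is at
most `ε^(number of rectangles)`, and `ε* ≥ 25((B*/B)(T•*/T•) ε)²`, then for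
every rectangle `2V*` the probability that the simulated damage intersects the
translate `w + V*` is at most `ε*`. -/
theorem simulation_damage_probability_bound
    {Ω : Type} [MeasurableSpace Ω] (μ : Measure Ω)
    (B T Bs Ts : ℝ) (hB : 0 < B) (hT : 0 < T) (hBs : 0 < Bs) (hTs : 0 < Ts)
    (hBBs : B ≤ Bs) (hTTs : T ≤ Ts)
    (ε εs : ENNReal)
    (D : Ω → Set (ℝ × ℝ))
    (V : Set (ℝ × ℝ))
    (hV : V = {p : ℝ × ℝ | -B / 4 ≤ p.1 ∧ p.1 < B / 4 ∧ -T / 4 < p.2 ∧ p.2 ≤ 0})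
    (Vs : Set (ℝ × ℝ))
    (hVs : Vs = {p : ℝ × ℝ | -Bs / 4 ≤ p.1 ∧ p.1 < Bs / 4 ∧ -Ts / 4 < p.2 ∧ p.2 ≤ 0})
    (hrestore : ∀ s : Finset (ℝ × ℝ),
      (↑s : Set (ℝ × ℝ)).PairwiseDisjoint (fun w => w +ᵥ ((2 : ℝ) • V)) →
      μ {ω | ∀ w ∈ s, ((w +ᵥ ((2 : ℝ) • V)) ∩ D ω).Nonempty} ≤ ε ^ s.card)
    (hεs : 25 * (ENNReal.ofReal ((Bs / B) * (Ts / T)) * ε) ^ 2 ≤ εs)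
    (Ds : Ω → Set (ℝ × ℝ))
    (hDs : ∀ ω, Ds ω = {p : ℝ × ℝ | ∃ u ∈ D ω, ∃ v ∈ D ω,
      Disjoint (u +ᵥ ((2 : ℝ) • V)) (v +ᵥ ((2 : ℝ) • V)) ∧
      (u +ᵥ ((3 : ℝ) • V)) ⊆ ((p + ((Bs / 2, 0) : ℝ × ℝ)) +ᵥ ((4 : ℝ) • Vs)) ∧
      (v +ᵥ ((3 : ℝ) • V)) ⊆ ((p + ((Bs / 2, 0) : ℝ × ℝ)) +ᵥ ((4 : ℝ) • Vs))}) :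
    ∀ w : ℝ × ℝ, μ {ω | ((w +ᵥ Vs) ∩ Ds ω).Nonempty} ≤ εs := by
  intro w
  classical
  have hb : (1:ℝ) ≤ Bs / B := (one_le_div hB).mpr hBBs
  have ht : (1:ℝ) ≤ Ts / T := (one_le_div hT).mpr hTTs
  have hBsB : (Bs/B) * B = Bs := div_mul_cancel₀ _ hB.ne'
  have hTsT : (Ts/T) * T = Ts := div_mul_cancel₀ _ hT.ne'
  have h2V : (2:ℝ) • V =
      {q : ℝ × ℝ | -(2*B) / 4 ≤ q.1 ∧ q.1 < 2*B / 4 ∧ -(2*T) / 4 < q.2 ∧ q.2 ≤ 0} := by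
    rw [hV]; exact smul_rect 2 B T (by norm_num)
  have h3V : (3:ℝ) • V =
      {q : ℝ × ℝ | -(3*B) / 4 ≤ q.1 ∧ q.1 < 3*B / 4 ∧ -(3*T) / 4 < q.2 ∧ q.2 ≤ 0} := by
    rw [hV]; exact smul_rect 3 B T (by norm_num)
  have h4Vs : (4:ℝ) • Vs =
      {q : ℝ × ℝ | -(4*Bs) / 4 ≤ q.1 ∧ q.1 < 4*Bs / 4 ∧ -(4*Ts) / 4 < q.2 ∧ q.2 ≤ 0} := by
    rw [hVs]; exact smul_rect 4 Bs Ts (by norm_num)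
  -- index bounds
  set ib : ℤ := ⌊(5:ℝ)/4 - 3*(Bs/B)/4⌋ with hib_def
  set it : ℤ := ⌈(7:ℝ)*(Bs/B)/4 - 1/4⌉ - 1 with hit_def
  set jb : ℤ := ⌊(3:ℝ)/2 - 5*(Ts/T)/2⌋ + 1 with hjb_def
  set Dh : ℤ := ⌈(2:ℝ)*(Bs/B) - 1/2⌉ - 1 with hDh_def
  set Dv : ℤ := ⌈(2:ℝ)*(Ts/T) - 1/2⌉ - 1 with hDv_def
  set Eh : ℤ := min Dh (it - ib) with hEh_def
  set Ev : ℤ := min Dv (0 - jb) with hEv_def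
  have hib0 : ib ≤ 0 := by
    have : ((5:ℝ)/4 - 3*(Bs/B)/4) ≤ 1/2 := by linarith
    calc ib ≤ ⌊(1:ℝ)/2⌋ := Int.floor_le_floor this
      _ = 0 := by norm_num
  have hit1 : 1 ≤ it := by
    have : (2:ℤ) ≤ ⌈(7:ℝ)*(Bs/B)/4 - 1/4⌉ := by
      rw [Int.le_ceil_iff]; push_cast; linarith
    omega
  have hjb0 : jb ≤ 0 := by
    have : ⌊(3:ℝ)/2 - 5*(Ts/T)/2⌋ < 0 := by
      rw [Int.floor_lt]; push_cast; linarith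
    omega
  have hDh1 : 1 ≤ Dh := by
    have : (2:ℤ) ≤ ⌈(2:ℝ)*(Bs/B) - 1/2⌉ := by
      rw [Int.le_ceil_iff]; push_cast; linarith
    omega
  have hDv1 : 1 ≤ Dv := by
    have : (2:ℤ) ≤ ⌈(2:ℝ)*(Ts/T) - 1/2⌉ := by
      rw [Int.le_ceil_iff]; push_cast; linarith
    omega
  have hEh0 : 0 ≤ Eh := le_min (by omega) (by omega)
  have hEv0 : 0 ≤ Ev := le_min (by omega) (by omega)
  -- the finsets
  set S : Finset (ℤ × ℤ) := Finset.Icc ib it ×ˢ Finset.Icc jb 0 with hS_def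
  set pt : ℤ × ℤ → ℝ × ℝ := fun a => (w.1 + a.1*B, w.2 + a.2*(T/2)) with hpt_def
  set P : Finset ((ℤ × ℤ) × (ℤ × ℤ)) := (S ×ˢ S).filter
    (fun q => |q.1.1 - q.2.1| ≤ Eh ∧ |q.1.2 - q.2.2| ≤ Ev ∧
      (q.1.1 < q.2.1 ∨ (q.1.1 = q.2.1 ∧ q.1.2 < q.2.2))) with hP_def
  set F : (ℤ × ℤ) × (ℤ × ℤ) → Set Ω := fun q =>
    {ω | ((pt q.1 +ᵥ ((2:ℝ) • V)) ∩ D ω).Nonempty ∧ ((pt q.2 +ᵥ ((2:ℝ) • V)) ∩ D ω).Nonempty}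
    with hF_def
  -- coverage
  have hcov : {ω | ((w +ᵥ Vs) ∩ Ds ω).Nonempty} ⊆ ⋃ q ∈ P, F q := by
    intro ω hω
    obtain ⟨p, hpw, hpD⟩ := hω
    rw [hDs ω] at hpD
    obtain ⟨u, hu, v, hv, hdisj, hu3, hv3⟩ := hpD
    rw [h3V, h4Vs] at hu3 hv3
    rw [h2V] at hdisj
    obtain ⟨⟨hu1a, hu1b⟩, hu2a, hu2b⟩ := u_bounds hB hT hBs hTs p u hu3
    obtain ⟨⟨hv1a, hv1b⟩, hv2a, hv2b⟩ := u_bounds hB hT hBs hTs p v hv3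
    rw [hVs, mem_vadd'] at hpw
    obtain ⟨hp1, hp2, hp3, hp4⟩ := hpw
    simp only [] at hp1 hp2 hp3 hp4
    have hT2 : (0:ℝ) < T/2 := by linarith
    obtain ⟨iu, hiu_def⟩ : ∃ n : ℤ, n = ⌊(u.1 - w.1)/B + 1/2⌋ := ⟨_, rfl⟩
    obtain ⟨ju, hju_def⟩ : ∃ n : ℤ, n = ⌈(u.2 - w.2)/(T/2)⌉ := ⟨_, rfl⟩
    obtain ⟨iv, hiv_def⟩ : ∃ n : ℤ, n = ⌊(v.1 - w.1)/B + 1/2⌋ := ⟨_, rfl⟩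
    obtain ⟨jv, hjv_def⟩ : ∃ n : ℤ, n = ⌈(v.2 - w.2)/(T/2)⌉ := ⟨_, rfl⟩
    -- scaled floor/ceil facts
    have hfu1 : (iu:ℝ)*B ≤ (u.1 - w.1) + B/2 := by
      have h := mul_le_mul_of_nonneg_right (Int.floor_le ((u.1 - w.1)/B + 1/2)) hB.le
      have hx : (u.1 - w.1)/B*B = u.1 - w.1 := div_mul_cancel₀ _ hB.ne'
      have he : ((u.1 - w.1)/B + 1/2)*B = (u.1 - w.1)/B*B + 1/2*B := by ring
      rw [hiu_def]; linarith
    have hfu2 : (u.1 - w.1) - B/2 < (iu:ℝ)*B := by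
      have h := mul_lt_mul_of_pos_right (Int.sub_one_lt_floor ((u.1 - w.1)/B + 1/2)) hB
      have hx : (u.1 - w.1)/B*B = u.1 - w.1 := div_mul_cancel₀ _ hB.ne'
      have he : ((u.1 - w.1)/B + 1/2 - 1)*B = (u.1 - w.1)/B*B - 1/2*B := by ring
      rw [hiu_def]; linarith
    have hfv1 : (iv:ℝ)*B ≤ (v.1 - w.1) + B/2 := by
      have h := mul_le_mul_of_nonneg_right (Int.floor_le ((v.1 - w.1)/B + 1/2)) hB.le
      have hx : (v.1 - w.1)/B*B = v.1 - w.1 := div_mul_cancel₀ _ hB.ne'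
      have he : ((v.1 - w.1)/B + 1/2)*B = (v.1 - w.1)/B*B + 1/2*B := by ring
      rw [hiv_def]; linarith
    have hfv2 : (v.1 - w.1) - B/2 < (iv:ℝ)*B := by
      have h := mul_lt_mul_of_pos_right (Int.sub_one_lt_floor ((v.1 - w.1)/B + 1/2)) hB
      have hx : (v.1 - w.1)/B*B = v.1 - w.1 := div_mul_cancel₀ _ hB.ne'
      have he : ((v.1 - w.1)/B + 1/2 - 1)*B = (v.1 - w.1)/B*B - 1/2*B := by ring
      rw [hiv_def]; linarith
    have hgu1 : (u.2 - w.2) ≤ (ju:ℝ)*(T/2) := by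
      have h := mul_le_mul_of_nonneg_right (Int.le_ceil ((u.2 - w.2)/(T/2))) hT2.le
      have hx : (u.2 - w.2)/(T/2)*(T/2) = u.2 - w.2 := div_mul_cancel₀ _ hT2.ne'
      rw [hju_def]; linarith
    have hgu2 : (ju:ℝ)*(T/2) < (u.2 - w.2) + T/2 := by
      have h := mul_lt_mul_of_pos_right (Int.ceil_lt_add_one ((u.2 - w.2)/(T/2))) hT2
      have hx : (u.2 - w.2)/(T/2)*(T/2) = u.2 - w.2 := div_mul_cancel₀ _ hT2.ne'
      have he : ((u.2 - w.2)/(T/2) + 1)*(T/2) = (u.2 - w.2)/(T/2)*(T/2) + T/2 := by ring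
      rw [hju_def]; linarith
    have hgv1 : (v.2 - w.2) ≤ (jv:ℝ)*(T/2) := by
      have h := mul_le_mul_of_nonneg_right (Int.le_ceil ((v.2 - w.2)/(T/2))) hT2.le
      have hx : (v.2 - w.2)/(T/2)*(T/2) = v.2 - w.2 := div_mul_cancel₀ _ hT2.ne'
      rw [hjv_def]; linarith
    have hgv2 : (jv:ℝ)*(T/2) < (v.2 - w.2) + T/2 := by
      have h := mul_lt_mul_of_pos_right (Int.ceil_lt_add_one ((v.2 - w.2)/(T/2))) hT2
      have hx : (v.2 - w.2)/(T/2)*(T/2) = v.2 - w.2 := div_mul_cancel₀ _ hT2.ne'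
      have he : ((v.2 - w.2)/(T/2) + 1)*(T/2) = (v.2 - w.2)/(T/2)*(T/2) + T/2 := by ring
      rw [hjv_def]; linarith
    -- Icc memberships
    have hIcc : ∀ (z : ℝ × ℝ), p.1 - Bs/2 + 3*B/4 ≤ z.1 → z.1 + 3*B/4 ≤ p.1 + 3*Bs/2 →
        p.2 - Ts + 3*T/4 ≤ z.2 → z.2 ≤ p.2 →
        ⌊(z.1 - w.1)/B + 1/2⌋ ∈ Finset.Icc ib it ∧ ⌈(z.2 - w.2)/(T/2)⌉ ∈ Finset.Icc jb 0 := by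
      intro z hz1 hz2 hz3 hz4
      constructor
      · rw [Finset.mem_Icc]
        constructor
        · rw [hib_def]
          apply Int.floor_le_floor
          have key : 3*B/4 - 3*Bs/4 ≤ z.1 - w.1 := by linarith
          have hdd : (3*B/4 - 3*Bs/4)/B ≤ (z.1 - w.1)/B := by gcongr
          have hcv : (3*B/4 - 3*Bs/4)/B = 5/4 - 3*(Bs/B)/4 - 1/2 := by
            field_simp; ring
          linarith
        · rw [hit_def]
          have key : z.1 - w.1 < 7*Bs/4 - 3*B/4 := by linarith
          have hdd : (z.1 - w.1)/B < (7*Bs/4 - 3*B/4)/B := by gcongr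
          have hcv : (7*Bs/4 - 3*B/4)/B = 7*(Bs/B)/4 - 3/4 := by
            field_simp
          have h1 : (⌊(z.1 - w.1)/B + 1/2⌋ : ℝ) < 7*(Bs/B)/4 - 1/4 := by
            have := Int.floor_le ((z.1 - w.1)/B + 1/2)
            linarith
          have := Int.lt_ceil.mpr h1
          omega
      · rw [Finset.mem_Icc]
        constructor
        · rw [hjb_def]
          have key : 3*T/4 - 5*Ts/4 < z.2 - w.2 := by linarith
          have hdd : (3*T/4 - 5*Ts/4)/(T/2) < (z.2 - w.2)/(T/2) := by gcongr
          have hcv : (3*T/4 - 5*Ts/4)/(T/2) = 3/2 - 5*(Ts/T)/2 := by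
            field_simp; ring
          have h1 : (3:ℝ)/2 - 5*(Ts/T)/2 < (⌈(z.2 - w.2)/(T/2)⌉ : ℝ) := by
            have := Int.le_ceil ((z.2 - w.2)/(T/2))
            linarith
          have := Int.floor_lt.mpr (by exact_mod_cast h1 :
            (3:ℝ)/2 - 5*(Ts/T)/2 < ((⌈(z.2 - w.2)/(T/2)⌉ : ℤ) : ℝ))
          omega
        · apply Int.ceil_le.mpr
          have key : z.2 - w.2 ≤ 0 := by linarith
          have : (z.2 - w.2)/(T/2) ≤ 0 := div_nonpos_of_nonpos_of_nonneg key hT2.le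
          exact_mod_cast this
    have hums := hIcc u hu1a hu1b hu2a hu2b
    have hvms := hIcc v hv1a hv1b hv2a hv2b
    rw [← hiu_def, ← hju_def] at hums
    rw [← hiv_def, ← hjv_def] at hvms
    have hiuI := Finset.mem_Icc.mp hums.1
    have hjuI := Finset.mem_Icc.mp hums.2
    have hivI := Finset.mem_Icc.mp hvms.1
    have hjvI := Finset.mem_Icc.mp hvms.2
    -- |Δi| ≤ Eh
    have hwinu : u.1 - v.1 ≤ 2*Bs - 3*B/2 := by linarith
    have hwinv : v.1 - u.1 ≤ 2*Bs - 3*B/2 := by linarith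
    have hcvB : (2*Bs - B/2)/B = 2*(Bs/B) - 1/2 := by
      rw [div_eq_iff hB.ne']; field_simp
    have habsh : |iu - iv| ≤ Eh := by
      apply le_min
      · have h1a : ((iu:ℝ) - iv) < (2*Bs - B/2)/B := by
          rw [lt_div_iff₀ hB]
          have he : ((iu:ℝ) - iv)*B = iu*B - iv*B := by ring
          linarith
        have h1b : ((iv:ℝ) - iu) < (2*Bs - B/2)/B := by
          rw [lt_div_iff₀ hB]
          have he : ((iv:ℝ) - iu)*B = iv*B - iu*B := by ring
          linarith
        rw [hcvB] at h1a h1b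
        have h4 : iu - iv < ⌈2*(Bs/B) - 1/2⌉ := Int.lt_ceil.mpr (by push_cast; linarith)
        have h5 : iv - iu < ⌈2*(Bs/B) - 1/2⌉ := Int.lt_ceil.mpr (by push_cast; linarith)
        rw [hDh_def, abs_le]
        omega
      · rw [abs_le]
        omega
    have hwinu2 : u.2 - v.2 ≤ Ts - 3*T/4 := by linarith
    have hwinv2 : v.2 - u.2 ≤ Ts - 3*T/4 := by linarith
    have hcvT : (Ts - T/4)/(T/2) = 2*(Ts/T) - 1/2 := by
      rw [div_eq_iff hT2.ne']; field_simp; ring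
    have habsv : |ju - jv| ≤ Ev := by
      apply le_min
      · have h1a : ((ju:ℝ) - jv) < (Ts - T/4)/(T/2) := by
          rw [lt_div_iff₀ hT2]
          have he : ((ju:ℝ) - jv)*(T/2) = ju*(T/2) - jv*(T/2) := by ring
          linarith
        have h1b : ((jv:ℝ) - ju) < (Ts - T/4)/(T/2) := by
          rw [lt_div_iff₀ hT2]
          have he : ((jv:ℝ) - ju)*(T/2) = jv*(T/2) - ju*(T/2) := by ring
          linarith
        rw [hcvT] at h1a h1b
        have h4 : ju - jv < ⌈2*(Ts/T) - 1/2⌉ := Int.lt_ceil.mpr (by push_cast; linarith)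
        have h5 : jv - ju < ⌈2*(Ts/T) - 1/2⌉ := Int.lt_ceil.mpr (by push_cast; linarith)
        rw [hDv_def, abs_le]
        omega
      · rw [abs_le]
        omega
    -- distinct tiles
    have hne : (iu, ju) ≠ (iv, jv) := by
      intro he
      have e1 : iu = iv := congrArg Prod.fst he
      have e2 : ju = jv := congrArg Prod.snd he
      have e1r : (iu:ℝ) = (iv:ℝ) := by exact_mod_cast e1
      have e2r : (ju:ℝ) = (jv:ℝ) := by exact_mod_cast e2
      apply same_tile_not_disjoint hB hT u v ?_ ?_ hdisj
      · rw [abs_lt]; constructor <;> nlinarith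
      · rw [abs_lt]; constructor <;> nlinarith
    -- memberships in the events
    have humem : u ∈ pt (iu, ju) +ᵥ ((2:ℝ) • V) := by
      rw [h2V, hpt_def, hiu_def, hju_def]
      exact tile_mem hB hT w u
    have hvmem : v ∈ pt (iv, jv) +ᵥ ((2:ℝ) • V) := by
      rw [h2V, hpt_def, hiv_def, hjv_def]
      exact tile_mem hB hT w v
    have hSu : (iu, ju) ∈ S := by
      rw [hS_def, Finset.mem_product]; exact ⟨hums.1, hums.2⟩
    have hSv : (iv, jv) ∈ S := by
      rw [hS_def, Finset.mem_product]; exact ⟨hvms.1, hvms.2⟩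
    have main : ∃ q ∈ P, ω ∈ F q := by
      rcases lt_trichotomy iu iv with hlt | heq | hgt
      · refine ⟨((iu, ju), (iv, jv)), ?_, ?_⟩
        · rw [hP_def, Finset.mem_filter, Finset.mem_product]
          exact ⟨⟨hSu, hSv⟩, habsh, habsv, Or.inl hlt⟩
        · rw [hF_def]
          exact ⟨⟨u, humem, hu⟩, ⟨v, hvmem, hv⟩⟩
      · rcases lt_trichotomy ju jv with h2 | h2e | h2
        · refine ⟨((iu, ju), (iv, jv)), ?_, ?_⟩
          · rw [hP_def, Finset.mem_filter, Finset.mem_product]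
            exact ⟨⟨hSu, hSv⟩, habsh, habsv, Or.inr ⟨heq, h2⟩⟩
          · rw [hF_def]
            exact ⟨⟨u, humem, hu⟩, ⟨v, hvmem, hv⟩⟩
        · exact absurd (Prod.ext heq h2e) hne
        · refine ⟨((iv, jv), (iu, ju)), ?_, ?_⟩
          · rw [hP_def, Finset.mem_filter, Finset.mem_product]
            exact ⟨⟨hSv, hSu⟩, by rw [abs_sub_comm]; exact habsh,
              by rw [abs_sub_comm]; exact habsv, Or.inr ⟨heq.symm, h2⟩⟩
          · rw [hF_def]
            exact ⟨⟨v, hvmem, hv⟩, ⟨u, humem, hu⟩⟩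
      · refine ⟨((iv, jv), (iu, ju)), ?_, ?_⟩
        · rw [hP_def, Finset.mem_filter, Finset.mem_product]
          exact ⟨⟨hSv, hSu⟩, by rw [abs_sub_comm]; exact habsh,
            by rw [abs_sub_comm]; exact habsv, Or.inl hgt⟩
        · rw [hF_def]
          exact ⟨⟨v, hvmem, hv⟩, ⟨u, humem, hu⟩⟩
    obtain ⟨q, hqP, hqF⟩ := main
    exact Set.mem_biUnion hqP hqF
  -- per-pair bound
  have hpair : ∀ q ∈ P, μ (F q) ≤ ε ^ 2 := by
    intro q hq
    rw [hP_def, Finset.mem_filter] at hq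
    obtain ⟨hqS, -, -, hlex⟩ := hq
    have hne : q.1 ≠ q.2 := by
      rcases hlex with h | ⟨h1, h2⟩
      · exact fun he => absurd (congrArg Prod.fst he) (ne_of_lt h)
      · exact fun he => absurd (congrArg Prod.snd he) (ne_of_lt h2)
    have hptne : pt q.1 ≠ pt q.2 := by
      intro he
      apply hne
      have e1 : w.1 + (q.1.1:ℝ)*B = w.1 + (q.2.1:ℝ)*B := congrArg Prod.fst he
      have e2 : w.2 + (q.1.2:ℝ)*(T/2) = w.2 + (q.2.2:ℝ)*(T/2) := congrArg Prod.snd he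
      have f1 : (q.1.1:ℝ) = (q.2.1:ℝ) :=
        mul_right_cancel₀ hB.ne' (by linarith)
      have f2 : (q.1.2:ℝ) = (q.2.2:ℝ) :=
        mul_right_cancel₀ (by linarith : (T/2:ℝ) ≠ 0) (by linarith)
      exact Prod.ext (by exact_mod_cast f1) (by exact_mod_cast f2)
    have hdisjt : Disjoint (pt q.1 +ᵥ ((2:ℝ) • V)) (pt q.2 +ᵥ ((2:ℝ) • V)) := by
      rw [h2V]; exact tiles_disjoint hB hT w q.1 q.2 hne
    have hpd : (↑({pt q.1, pt q.2} : Finset (ℝ × ℝ)) : Set (ℝ × ℝ)).PairwiseDisjoint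
        (fun w' => w' +ᵥ ((2:ℝ) • V)) := by
      intro x hx y hy hxy
      simp only [Finset.coe_insert, Finset.coe_singleton, Set.mem_insert_iff,
        Set.mem_singleton_iff] at hx hy
      rcases hx with rfl | rfl <;> rcases hy with rfl | rfl
      · exact absurd rfl hxy
      · exact hdisjt
      · exact hdisjt.symm
      · exact absurd rfl hxy
    have hc2 : ({pt q.1, pt q.2} : Finset (ℝ × ℝ)).card = 2 := Finset.card_pair hptne
    have hres := hrestore {pt q.1, pt q.2} hpd
    rw [hc2] at hres
    refine le_trans (measure_mono ?_) hres
    intro ω hω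
    rw [hF_def] at hω
    intro w' hw'
    simp only [Finset.mem_insert, Finset.mem_singleton] at hw'
    rcases hw' with rfl | rfl
    · exact hω.1
    · exact hω.2
  -- cardinality bound
  have hcard : (P.card : ℝ) ≤ 25 * ((Bs/B) * (Ts/T))^2 := by
    set Q : Finset ((ℤ × ℤ) × (ℤ × ℤ)) := (S ×ˢ S).filter
      (fun q => |q.1.1 - q.2.1| ≤ Eh ∧ |q.1.2 - q.2.2| ≤ Ev) with hQ_def
    have hPQ : P ⊆ Q := by
      intro q hq
      rw [hP_def, Finset.mem_filter] at hq
      rw [hQ_def, Finset.mem_filter]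
      exact ⟨hq.1, hq.2.1, hq.2.2.1⟩
    have hPswQ : P.image Prod.swap ⊆ Q := by
      intro q hq
      rw [Finset.mem_image] at hq
      obtain ⟨r, hr, rfl⟩ := hq
      rw [hP_def, Finset.mem_filter] at hr
      rw [hQ_def, Finset.mem_filter]
      rw [Finset.mem_product] at hr ⊢
      refine ⟨⟨hr.1.2, hr.1.1⟩, ?_, ?_⟩
      · rw [show (Prod.swap r).1 = r.2 from rfl, show (Prod.swap r).2 = r.1 from rfl,
          abs_sub_comm]
        exact hr.2.1
      · rw [show (Prod.swap r).1 = r.2 from rfl, show (Prod.swap r).2 = r.1 from rfl,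
          abs_sub_comm]
        exact hr.2.2.1
    have hdisjPP : Disjoint P (P.image Prod.swap) := by
      rw [Finset.disjoint_left]
      intro q hq hq2
      rw [Finset.mem_image] at hq2
      obtain ⟨r, hr, he⟩ := hq2
      rw [hP_def, Finset.mem_filter] at hq hr
      have l1 := hq.2.2.2
      have l2 := hr.2.2.2
      have e1 : q.1 = r.2 := by rw [← he]; exact Prod.fst_swap
      have e2 : q.2 = r.1 := by rw [← he]; exact Prod.snd_swap
      rw [e1, e2] at l1
      rcases l1 with h | ⟨h1, h2⟩ <;> rcases l2 with g | ⟨g1, g2⟩ <;> omega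
    have h2P : 2 * P.card ≤ Q.card := by
      have himg : (P.image Prod.swap).card = P.card :=
        Finset.card_image_of_injective _ Prod.swap_injective
      have hcu := Finset.card_union_of_disjoint hdisjPP
      have hle := Finset.card_le_card (Finset.union_subset hPQ hPswQ)
      omega
    set Qh : Finset (ℤ × ℤ) := (Finset.Icc ib it ×ˢ Finset.Icc ib it).filter
      (fun q => |q.1 - q.2| ≤ ((Eh.toNat : ℕ) : ℤ)) with hQh_def
    set Qv : Finset (ℤ × ℤ) := (Finset.Icc jb 0 ×ˢ Finset.Icc jb 0).filter
      (fun q => |q.1 - q.2| ≤ ((Ev.toNat : ℕ) : ℤ)) with hQv_def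
    have hEhn : ((Eh.toNat : ℕ) : ℤ) = Eh := Int.toNat_of_nonneg hEh0
    have hEvn : ((Ev.toNat : ℕ) : ℤ) = Ev := Int.toNat_of_nonneg hEv0
    have hQcard : Q.card ≤ Qh.card * Qv.card := by
      rw [← Finset.card_product]
      apply Finset.card_le_card_of_injOn (fun q => ((q.1.1, q.2.1), (q.1.2, q.2.2)))
      · intro q hq
        rw [hQ_def, Finset.mem_coe, Finset.mem_filter, Finset.mem_product] at hq
        obtain ⟨⟨hq1, hq2⟩, hc1, hc2⟩ := hq
        rw [hS_def, Finset.mem_product] at hq1 hq2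
        rw [Finset.mem_coe, Finset.mem_product]
        constructor
        · rw [hQh_def, Finset.mem_filter, Finset.mem_product]
          exact ⟨⟨hq1.1, hq2.1⟩, by rw [hEhn]; exact hc1⟩
        · rw [hQv_def, Finset.mem_filter, Finset.mem_product]
          exact ⟨⟨hq1.2, hq2.2⟩, by rw [hEvn]; exact hc2⟩
      · intro q hq r hr he
        simp only [Prod.ext_iff] at he ⊢
        obtain ⟨⟨f1, f2⟩, f3, f4⟩ := he
        exact ⟨⟨f1, f3⟩, f2, f4⟩
    have hQhZ : ((Qh.card : ℤ) : ℝ) ≤ 7 * (Bs/B)^2 := by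
      have h1 : (Qh.card : ℤ) ≤ (2*(Eh.toNat : ℕ)+1)*(it - ib + 1)
          - (Eh.toNat : ℕ)*((Eh.toNat : ℕ)+1) :=
        card_window ib it Eh.toNat (by rw [hEhn]; exact le_trans (min_le_right _ _) le_rfl)
      have h2 : ((2*((Eh.toNat : ℕ):ℤ)+1)*(it - ib + 1)
          - ((Eh.toNat : ℕ):ℤ)*(((Eh.toNat : ℕ):ℤ)+1) : ℝ) ≤ 7 * (Bs/B)^2 := by
        have hnum := numeric_h (Bs/B) hb ib it Eh.toNat
          (by
            have := Int.sub_one_lt_floor ((5:ℝ)/4 - 3*(Bs/B)/4)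
            rw [← hib_def] at this
            linarith)
          (by
            have := Int.ceil_lt_add_one ((7:ℝ)*(Bs/B)/4 - 1/4)
            have h3 : (it:ℝ) = (⌈(7:ℝ)*(Bs/B)/4 - 1/4⌉ : ℝ) - 1 := by
              rw [hit_def]; push_cast; ring
            linarith)
          (by omega)
          (by rw [hEhn]; exact min_le_right _ _)
          (by
            have hDhr : (Dh:ℝ) < 2*(Bs/B) - 1/2 := by
              have := Int.ceil_lt_add_one ((2:ℝ)*(Bs/B) - 1/2)
              rw [hDh_def]; push_cast; linarith
            have hEhD : ((Eh.toNat : ℕ):ℤ) ≤ Dh := by rw [hEhn]; exact min_le_left _ _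
            have : (((Eh.toNat : ℕ):ℤ):ℝ) ≤ (Dh:ℝ) := by exact_mod_cast hEhD
            push_cast at this ⊢
            linarith)
        push_cast at hnum ⊢
        linarith
      calc ((Qh.card : ℤ) : ℝ) ≤ ((2*((Eh.toNat : ℕ):ℤ)+1)*(it - ib + 1)
            - ((Eh.toNat : ℕ):ℤ)*(((Eh.toNat : ℕ):ℤ)+1) : ℝ) := by exact_mod_cast h1
        _ ≤ 7 * (Bs/B)^2 := h2
    have hQvZ : ((Qv.card : ℤ) : ℝ) ≤ 7 * (Ts/T)^2 := by
      have h1 : (Qv.card : ℤ) ≤ (2*(Ev.toNat : ℕ)+1)*(0 - jb + 1)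
          - (Ev.toNat : ℕ)*((Ev.toNat : ℕ)+1) :=
        card_window jb 0 Ev.toNat (by rw [hEvn]; exact min_le_right _ _)
      have h2 : ((2*((Ev.toNat : ℕ):ℤ)+1)*(0 - jb + 1)
          - ((Ev.toNat : ℕ):ℤ)*(((Ev.toNat : ℕ):ℤ)+1) : ℝ) ≤ 7 * (Ts/T)^2 := by
        have hnum := numeric_v (Ts/T) ht jb Ev.toNat
          (by
            have := Int.sub_one_lt_floor ((3:ℝ)/2 - 5*(Ts/T)/2)
            have h3 : (jb:ℝ) = (⌊(3:ℝ)/2 - 5*(Ts/T)/2⌋ : ℝ) + 1 := by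
              rw [hjb_def]; push_cast; ring
            linarith)
          hjb0
          (by rw [hEvn]; exact min_le_right _ _)
          (by
            have hDvr : (Dv:ℝ) < 2*(Ts/T) - 1/2 := by
              have := Int.ceil_lt_add_one ((2:ℝ)*(Ts/T) - 1/2)
              rw [hDv_def]; push_cast; linarith
            have hEvD : ((Ev.toNat : ℕ):ℤ) ≤ Dv := by rw [hEvn]; exact min_le_left _ _
            have : (((Ev.toNat : ℕ):ℤ):ℝ) ≤ (Dv:ℝ) := by exact_mod_cast hEvD
            push_cast at this ⊢
            linarith)
        push_cast at hnum ⊢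
        linarith
      calc ((Qv.card : ℤ) : ℝ) ≤ ((2*((Ev.toNat : ℕ):ℤ)+1)*(0 - jb + 1)
            - ((Ev.toNat : ℕ):ℤ)*(((Ev.toNat : ℕ):ℤ)+1) : ℝ) := by exact_mod_cast h1
        _ ≤ 7 * (Ts/T)^2 := h2
    have hmul : ((Qh.card : ℝ)) * ((Qv.card : ℝ)) ≤ 49 * ((Bs/B)^2 * (Ts/T)^2) := by
      push_cast at hQhZ hQvZ
      nlinarith [Nat.cast_nonneg (α := ℝ) Qh.card, Nat.cast_nonneg (α := ℝ) Qv.card,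
        sq_nonneg (Bs/B), sq_nonneg (Ts/T)]
    have h2Pr : 2 * (P.card : ℝ) ≤ 49 * ((Bs/B)^2 * (Ts/T)^2) := by
      have : ((2 * P.card : ℕ) : ℝ) ≤ ((Qh.card * Qv.card : ℕ) : ℝ) := by
        exact_mod_cast le_trans h2P hQcard
      push_cast at this
      linarith
    nlinarith [mul_nonneg (mul_nonneg (le_trans zero_le_one hb) (le_trans zero_le_one hb))
      (mul_nonneg (le_trans zero_le_one ht) (le_trans zero_le_one ht))]
  -- assembly
  calc μ {ω | ((w +ᵥ Vs) ∩ Ds ω).Nonempty}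
      ≤ μ (⋃ q ∈ P, F q) := measure_mono hcov
    _ ≤ ∑ q ∈ P, μ (F q) := measure_biUnion_finset_le P F
    _ ≤ ∑ _q ∈ P, ε ^ 2 := Finset.sum_le_sum hpair
    _ = (P.card : ENNReal) * ε ^ 2 := by rw [Finset.sum_const, nsmul_eq_mul]
    _ ≤ 25 * (ENNReal.ofReal ((Bs / B) * (Ts / T)) * ε) ^ 2 := by
        have hX0 : (0:ℝ) ≤ (Bs/B) * (Ts/T) := by positivity
        have h1 : (P.card : ENNReal) ≤ ENNReal.ofReal (25 * ((Bs/B) * (Ts/T))^2) := by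
          rw [← ENNReal.ofReal_natCast]
          exact ENNReal.ofReal_le_ofReal hcard
        calc (P.card : ENNReal) * ε ^ 2
            ≤ ENNReal.ofReal (25 * ((Bs/B) * (Ts/T))^2) * ε ^ 2 :=
              mul_le_mul_left h1 _
          _ = 25 * (ENNReal.ofReal ((Bs / B) * (Ts / T)) * ε) ^ 2 := by
              have h2 : ENNReal.ofReal (25 * ((Bs/B) * (Ts/T))^2) =
                  25 * (ENNReal.ofReal ((Bs/B) * (Ts/T)))^2 := by
                rw [ENNReal.ofReal_mul (by norm_num : (0:ℝ) ≤ 25),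
                  ENNReal.ofReal_pow hX0, ENNReal.ofReal_ofNat]
              rw [h2, mul_pow]; ring
    _ ≤ εs := hεs
end
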